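/- arXiv:1501.07364 — 5 statements merged into one kernel-verified Lean document; each statement's English description precedes it below -/
import Mathlib

section
/- Let V be a Hilbert space, W ⊆ V a closed subspace, and 𝔞 : V × V → ℂ a bounded sesquilinear form such that the operator 𝓛 : W → W' defined by ⟨𝓛h, g⟩ = 𝔞(h,g) for h,g ∈ W is invertible. Then V decomposes as a direct sum V = V_H ⊕ W, where V_H = { u ∈ V : 𝔞(u,g) = 0 for all g ∈ W }. -/
/-! By the Riesz representation theorem on the Hilbert space `W`, the bounded conjugate-linear
functional `g ↦ 𝔞(u, g)` is `g ↦ ⟪g, y⟫` for some `y ∈ W`. Since `𝓛` is invertible, `y = T h`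
for a unique `h ∈ W`, so `u_0 := h` and `u_H := u - h` give the decomposition. Uniqueness holds
because `𝔞(d, ·)` vanishing on `W` for some `d ∈ W` forces `⟪T d, T d⟫ = 𝔞(d, T d) = 0`,
hence `d = 0`. -/

open scoped InnerProductSpace ComplexConjugate

theorem exists_inner_eq_of_conjLinear_of_bounded {𝕜 E : Type*} [RCLike 𝕜] [NormedAddCommGroup E]
    [InnerProductSpace 𝕜 E] [CompleteSpace E] (φ : E → 𝕜)
    (hadd : ∀ x y, φ (x + y) = φ x + φ y) (hsmul : ∀ (c : 𝕜) x, φ (c • x) = conj c * φ x)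
    (M : ℝ) (hM : ∀ x, ‖φ x‖ ≤ M * ‖x‖) :
    ∃ y : E, ∀ x, φ x = ⟪x, y⟫_𝕜 := by
  let f : StrongDual 𝕜 E := LinearMap.mkContinuous
    { toFun := fun x => conj (φ x)
      map_add' := fun x y => by simp only [hadd, map_add]
      map_smul' := fun c x => by simp only [hsmul, map_mul, RCLike.conj_conj, RingHom.id_apply,
        smul_eq_mul] }
    M (fun x => by simpa only [LinearMap.coe_mk, AddHom.coe_mk, RCLike.norm_conj] using hM x)
  refine ⟨(InnerProductSpace.toDual 𝕜 E).symm f, fun x => ?_⟩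
  rw [← inner_conj_symm, InnerProductSpace.toDual_symm_apply]
  simp [f]

section InvertibleForm

variable {𝕜 V : Type*} [RCLike 𝕜] [NormedAddCommGroup V] [InnerProductSpace 𝕜 V]
  {W : Submodule 𝕜 V} {a : V → V → 𝕜} (T : W ≃L[𝕜] W)
  (hT : ∀ h g : W, a (h : V) (g : V) = ⟪(g : V), ((T h : W) : V)⟫_𝕜)
include hT

theorem eq_zero_of_mem_of_forall_form_eq_zero {d : V} (hd : d ∈ W)
    (hda : ∀ g ∈ W, a d g = 0) : d = 0 := by
  have hTd : T ⟨d, hd⟩ = 0 := by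
    rw [← inner_self_eq_zero (𝕜 := 𝕜), Submodule.coe_inner, ← hT]
    exact hda _ (T ⟨d, hd⟩).2
  simpa using congrArg Subtype.val (T.map_eq_zero_iff.mp hTd)

theorem exists_mem_forall_form_eq [CompleteSpace W] (u : V)
    (hadd : ∀ g g' : W, a u (g + g' : W) = a u g + a u g')
    (hsmul : ∀ (c : 𝕜) (g : W), a u (c • g : W) = conj c * a u g)
    (M : ℝ) (hM : ∀ g : W, ‖a u g‖ ≤ M * ‖g‖) :
    ∃ h ∈ W, ∀ g ∈ W, a h g = a u g := by
  obtain ⟨y, hy⟩ := exists_inner_eq_of_conjLinear_of_bounded (fun g : W => a u g) hadd hsmul M hM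
  refine ⟨T.symm y, (T.symm y).2, fun g hg => ?_⟩
  rw [hT _ ⟨g, hg⟩, T.apply_symm_apply, ← Submodule.coe_inner, ← hy]

end InvertibleForm

theorem decomposition_VH_oplus_W
    {V : Type*} [NormedAddCommGroup V] [InnerProductSpace ℂ V] [CompleteSpace V]
    (W : Submodule ℂ V) (hW : IsClosed (W : Set V))
    (a : V → V → ℂ)
    -- `a` is sesquilinear:
    (ha1 : ∀ v, IsLinearMap ℂ fun u => a u v)
    (ha2 : ∀ u v w : V, a u (v + w) = a u v + a u w)
    (ha3 : ∀ (c : ℂ) (u v : V), a u (c • v) = starRingEnd ℂ c * a u v)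
    -- `a` is bounded:
    (C : ℝ) (hbound : ∀ u v, ‖a u v‖ ≤ C * ‖u‖ * ‖v‖)
    -- the operator `𝓛 : W → W'`, `⟨𝓛h, g⟩ = 𝔞(h,g)`, is invertible:
    (T : W ≃L[ℂ] W) (hT : ∀ h g : W, a (h : V) (g : V) = ⟪(g : V), ((T h : W) : V)⟫_ℂ) :
    ∀ u : V, ∃! p : V × V,
      (∀ g ∈ W, a p.1 g = 0) ∧ p.2 ∈ W ∧ u = p.1 + p.2 := by
  have : CompleteSpace W := hW.completeSpace_coe
  have a_sub : ∀ g u v, a (u - v) g = a u g - a v g := fun g => (ha1 g).map_sub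
  intro u
  obtain ⟨h, hW_h, hh⟩ := exists_mem_forall_form_eq T hT u (fun g g' => ha2 u g g')
    (fun c g => ha3 c u g) (C * ‖u‖) (fun g => hbound u g)
  refine ⟨(u - h, h), ⟨fun g hg => by rw [a_sub, hh g hg, sub_self], hW_h, by simp⟩, ?_⟩
  rintro ⟨q₁, q₂⟩ ⟨hq₁, hq₂, rfl⟩
  have hdiff : q₂ - h = (q₁ + q₂ - h) - q₁ := by abel
  have hq₂ : q₂ - h = 0 := by
    refine eq_zero_of_mem_of_forall_form_eq_zero T hT (W.sub_mem hq₂ hW_h) fun g hg => ?_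
    rw [hdiff, a_sub, a_sub, hh g hg, hq₁ g hg, sub_self, sub_zero]
  rw [sub_eq_zero.mp hq₂, add_sub_cancel_right]
end

section
/- Let 𝔟 be a sesquilinear form on a Hilbert space K with domain D(𝔟) = T(V_H), defined by 𝔟(Tu, Tv) = 𝔞(u,v) for u, v ∈ V_H, where T : V_H → K is bounded linear and injective and 𝔞 is a bounded sesquilinear form on the Hilbert space V ⊇ V_H. Assume there exist constants w, δ > 0 with Re 𝔟(φ,φ) + w ‖φ‖_K² ≥ δ ‖u‖_V² whenever φ = Tu, u ∈ V_H, and V_H is closed in V. Then 𝔟 is a closed form: D(𝔟) is complete for the norm φ ↦ (Re 𝔟(φ,φ) + w ‖φ‖_K²)^{1/2}. -/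
/-! By coercivity, the form norm dominates `√δ ‖·‖_V` on `V_H`, so a form-Cauchy sequence is
Cauchy in `V`; its limit lies in the closed subspace `V_H`. Conversely, boundedness of `𝔞` and
of `T` bound the squared form norm by a multiple of `‖·‖_V²`, so convergence in `V` gives
convergence in the form norm. -/

open Filter Topology

lemma cauchySeq_of_mul_sq_norm_sub_le {E : Type*} [SeminormedAddCommGroup E] {u : ℕ → E}
    {f : ℕ → ℕ → ℝ} {δ : ℝ} (hδ : 0 < δ) (hle : ∀ m n, δ * ‖u n - u m‖ ^ 2 ≤ f m n)
    (hf : ∀ ε > (0 : ℝ), ∃ N, ∀ m ≥ N, ∀ n ≥ N, f m n < ε) : CauchySeq u := by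
  rw [Metric.cauchySeq_iff]
  intro ε hε
  obtain ⟨N, hN⟩ := hf (δ * ε ^ 2) (by positivity)
  refine ⟨N, fun m hm n hn => ?_⟩
  have hsq : ‖u m - u n‖ ^ 2 < ε ^ 2 :=
    (mul_lt_mul_iff_right₀ hδ).mp ((hle n m).trans_lt (hN n hn m hm))
  rw [dist_eq_norm]
  exact lt_of_pow_lt_pow_left₀ 2 hε.le hsq

lemma re_add_mul_sq_norm_le {V K : Type*} [NormedAddCommGroup V] [NormedSpace ℂ V]
    [NormedAddCommGroup K] [NormedSpace ℂ K] {a : V → V → ℂ} {C : ℝ}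
    (hbound : ∀ u v, ‖a u v‖ ≤ C * ‖u‖ * ‖v‖) (T : V →L[ℂ] K) {w : ℝ} (hw : 0 ≤ w) (x : V) :
    (a x x).re + w * ‖T x‖ ^ 2 ≤ (C + w * ‖T‖ ^ 2) * ‖x‖ ^ 2 := by
  have ha : (a x x).re ≤ C * ‖x‖ ^ 2 :=
    calc (a x x).re ≤ ‖a x x‖ := Complex.re_le_norm _
      _ ≤ C * ‖x‖ * ‖x‖ := hbound x x
      _ = C * ‖x‖ ^ 2 := by ring
  have hT : w * ‖T x‖ ^ 2 ≤ w * (‖T‖ * ‖x‖) ^ 2 := by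
    gcongr
    exact T.le_opNorm x
  linarith

theorem form_b_is_closed_general
    {V K : Type*} [NormedAddCommGroup V] [InnerProductSpace ℂ V] [CompleteSpace V]
    [NormedAddCommGroup K] [InnerProductSpace ℂ K]
    (VH : Submodule ℂ V) (hVH : IsClosed (VH : Set V))
    (T : V →L[ℂ] K)
    (a : V → V → ℂ)
    -- `a` is bounded:
    (C : ℝ) (hbound : ∀ u v, ‖a u v‖ ≤ C * ‖u‖ * ‖v‖)
    -- the coercivity-type estimate `Re 𝔟(φ,φ) + w ‖φ‖² ≥ δ ‖u‖_V²` for `φ = T u`: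
    (w δ : ℝ) (hw : 0 < w) (hδ : 0 < δ)
    (hcoer : ∀ u ∈ VH, δ * ‖u‖ ^ 2 ≤ (a u u).re + w * ‖T u‖ ^ 2) :
    -- closedness of `𝔟`:
    ∀ u : ℕ → V, (∀ n, u n ∈ VH) →
      (∀ ε > (0 : ℝ), ∃ N, ∀ m ≥ N, ∀ n ≥ N,
        (a (u n - u m) (u n - u m)).re + w * ‖T (u n) - T (u m)‖ ^ 2 < ε) →
      ∃ v ∈ VH, Tendsto
        (fun n => (a (u n - v) (u n - v)).re + w * ‖T (u n) - T v‖ ^ 2)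
        atTop (nhds 0) := by
  intro u hu hCauchy
  have hcoer_sub : ∀ x ∈ VH, ∀ y ∈ VH,
      δ * ‖x - y‖ ^ 2 ≤ (a (x - y) (x - y)).re + w * ‖T x - T y‖ ^ 2 := fun x hx y hy => by
    simpa only [map_sub] using hcoer _ (VH.sub_mem hx hy)
  obtain ⟨v, hv⟩ := cauchySeq_tendsto_of_complete <|
    cauchySeq_of_mul_sq_norm_sub_le hδ (fun m n => hcoer_sub _ (hu n) _ (hu m)) hCauchy
  have hvVH : v ∈ VH := hVH.mem_of_tendsto hv (Eventually.of_forall hu)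
  refine ⟨v, hvVH, ?_⟩
  have hsq : Tendsto (fun n => (C + w * ‖T‖ ^ 2) * ‖u n - v‖ ^ 2) atTop (𝓝 0) := by
    simpa using ((tendsto_iff_norm_sub_tendsto_zero.mp hv).pow 2).const_mul (C + w * ‖T‖ ^ 2)
  refine squeeze_zero (fun n => ?_) (fun n => ?_) hsq
  · exact (by positivity : 0 ≤ δ * ‖u n - v‖ ^ 2).trans (hcoer_sub _ (hu n) _ hvVH)
  · simpa only [map_sub] using re_add_mul_sq_norm_le hbound T hw.le (u n - v)

theorem form_b_is_closed
    {V K : Type*} [NormedAddCommGroup V] [InnerProductSpace ℂ V] [CompleteSpace V]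
    [NormedAddCommGroup K] [InnerProductSpace ℂ K] [CompleteSpace K]
    (VH : Submodule ℂ V) (hVH : IsClosed (VH : Set V))
    (T : V →L[ℂ] K) (hTinj : Set.InjOn T (VH : Set V))
    (a : V → V → ℂ)
    -- `a` is sesquilinear:
    (ha1 : ∀ v, IsLinearMap ℂ fun u => a u v)
    (ha2 : ∀ u v w : V, a u (v + w) = a u v + a u w)
    (ha3 : ∀ (c : ℂ) (u v : V), a u (c • v) = starRingEnd ℂ c * a u v)
    -- `a` is bounded:
    (C : ℝ) (hbound : ∀ u v, ‖a u v‖ ≤ C * ‖u‖ * ‖v‖)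
    -- the coercivity-type estimate `Re 𝔟(φ,φ) + w ‖φ‖² ≥ δ ‖u‖_V²` for `φ = T u`:
    (w δ : ℝ) (hw : 0 < w) (hδ : 0 < δ)
    (hcoer : ∀ u ∈ VH, δ * ‖u‖ ^ 2 ≤ (a u u).re + w * ‖T u‖ ^ 2) :
    -- closedness of `𝔟`:
    ∀ u : ℕ → V, (∀ n, u n ∈ VH) →
      (∀ ε > (0 : ℝ), ∃ N, ∀ m ≥ N, ∀ n ≥ N,
        (a (u n - u m) (u n - u m)).re + w * ‖T (u n) - T (u m)‖ ^ 2 < ε) →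
      ∃ v ∈ VH, Tendsto
        (fun n => (a (u n - v) (u n - v)).re + w * ‖T (u n) - T v‖ ^ 2)
        atTop (nhds 0) :=
  form_b_is_closed_general VH hVH T a C hbound w δ hw hδ hcoer
end

section
/- The closure in L²(∂Ω) of the domain D(𝔟) = Tr(V) = { Tr u : u ∈ W^{1,2}(Ω), Tr u = 0 on Γ_0 } equals L²(Γ_1) ⊕ {0}, i.e., the set of L² functions on ∂Ω vanishing a.e. on Γ_0. -/
/-!
A.e. vanishing on `Γ₀` survives `L²` limits, since a subsequence converges a.e.; this gives `⊆`.
Conversely, by Stone–Weierstrass the restrictions to `∂Ω` of bounded Lipschitz functions on `ℝ^d`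
are uniformly dense in `C(∂Ω)`, hence dense in `L²(∂Ω)`. Let `φ` vanish on `Γ₀` and let
`wₙ = 1 - thickenedIndicator (1/(n+1)) Γ₀`. Multiplication by `wₙ` is a contraction of `L²`
that maps bounded Lipschitz functions to bounded Lipschitz functions vanishing on `Γ₀`, so
`wₙ φ` lies in the closure of the trace space; and `wₙ φ → φ` by dominated convergence.
-/

open MeasureTheory Metric Filter Topology
open scoped NNReal ENNReal

section Measure

variable {α : Type*} [MeasurableSpace α] {μ : Measure α}

theorem tendsto_eLpNorm_zero_of_dominated {E : Type*} [NormedAddCommGroup E] {p : ℝ≥0∞}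
    (hp0 : p ≠ 0) (hp : p ≠ ∞) {f : ℕ → α → E} {g : α → ℝ}
    (hf : ∀ n, AEStronglyMeasurable (f n) μ) (hg : MemLp g p μ)
    (hfg : ∀ n, ∀ᵐ x ∂μ, ‖f n x‖ ≤ g x)
    (hlim : ∀ᵐ x ∂μ, Tendsto (fun n => f n x) atTop (𝓝 0)) :
    Tendsto (fun n => eLpNorm (f n) p μ) atTop (𝓝 0) := by
  have hp_pos : 0 < p.toReal := ENNReal.toReal_pos hp0 hp
  have hint : Tendsto (fun n => ∫⁻ x, ‖f n x‖ₑ ^ p.toReal ∂μ) atTop (𝓝 0) := by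
    have hcont : Continuous fun y : E => ‖y‖ₑ ^ p.toReal :=
      ENNReal.continuous_rpow_const.comp continuous_enorm
    simpa [ENNReal.zero_rpow_of_pos hp_pos] using
      tendsto_lintegral_of_dominated_convergence' (fun x => ‖g x‖ₑ ^ p.toReal)
        (fun n => (hf n).enorm.pow_const _)
        (fun n => (hfg n).mono fun x hx => ENNReal.rpow_le_rpow
          (enorm_le_iff_norm_le.2 (hx.trans (Real.le_norm_self _))) hp_pos.le)
        (lintegral_rpow_enorm_lt_top_of_eLpNorm_lt_top hp0 hp hg.eLpNorm_lt_top).ne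
        (hlim.mono fun x hx => (hcont.tendsto 0).comp hx)
  have := ((ENNReal.continuous_rpow_const (y := 1 / p.toReal)).tendsto 0).comp hint
  rw [ENNReal.zero_rpow_of_pos (one_div_pos.2 hp_pos)] at this
  simp_rw [eLpNorm_eq_lintegral_rpow_enorm_toReal hp0 hp]
  exact this

variable {p : ℝ≥0∞} [Fact (1 ≤ p)]

theorem tendsto_holder_mul_of_tendsto_ae {𝕜 : Type*} [RCLike 𝕜] (hp : p ≠ ∞)
    {w : ℕ → Lp 𝕜 ∞ μ} {φ : Lp 𝕜 p μ}
    (hw : ∀ n, ∀ᵐ x ∂μ, ‖w n x‖ ≤ 1)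
    (hlim : ∀ᵐ x ∂μ, Tendsto (fun n => w n x * φ x) atTop (𝓝 (φ x))) :
    Tendsto (fun n => (ContinuousLinearMap.mul 𝕜 𝕜).holder p (w n) φ) atTop (𝓝 φ) := by
  rw [Lp.tendsto_Lp_iff_tendsto_eLpNorm']
  have hcoe (n : ℕ) : ⇑((ContinuousLinearMap.mul 𝕜 𝕜).holder p (w n) φ) - ⇑φ =ᵐ[μ]
      fun x => w n x * φ x - φ x := by
    filter_upwards [(ContinuousLinearMap.mul 𝕜 𝕜).coeFn_holder (r := p) (w n) φ] with x hx
    simp [hx]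
  simp_rw [eLpNorm_congr_ae (hcoe _)]
  refine tendsto_eLpNorm_zero_of_dominated (g := fun x => 2 * ‖φ x‖)
    (zero_lt_one.trans_le Fact.out).ne' hp
    (fun n => ((Lp.aestronglyMeasurable (w n)).mul (Lp.aestronglyMeasurable φ)).sub
      (Lp.aestronglyMeasurable φ)) ((Lp.memLp φ).norm.const_mul 2) (fun n => ?_) ?_
  · filter_upwards [hw n] with x hx
    calc ‖w n x * φ x - φ x‖ ≤ ‖w n x‖ * ‖φ x‖ + ‖φ x‖ :=
          (norm_sub_le _ _).trans (by rw [norm_mul])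
      _ ≤ 1 * ‖φ x‖ + ‖φ x‖ := by gcongr
      _ = 2 * ‖φ x‖ := by ring
  · filter_upwards [hlim] with x hx
    simpa using hx.sub_const (φ x)

theorem isClosed_setOf_ae_mem_imp_eq_zero {E : Type*} [NormedAddCommGroup E] (t : Set α) :
    IsClosed {φ : Lp E p μ | ∀ᵐ x ∂μ, x ∈ t → φ x = 0} := by
  refine IsSeqClosed.isClosed fun ψ φ hψ hlim => ?_
  obtain ⟨ns, -, hae⟩ := (tendstoInMeasure_of_tendsto_Lp hlim).exists_seq_tendsto_ae
  filter_upwards [hae, ae_all_iff.2 hψ] with x hx_lim hx_zero hxt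
  simp only [hx_zero _ hxt] at hx_lim
  exact tendsto_nhds_unique hx_lim tendsto_const_nhds

end Measure

section PseudoMetricSpace

variable {X : Type*} [PseudoMetricSpace X]

def BoundedLipschitz {E : Type*} [SeminormedAddCommGroup E] (u : X → E) : Prop :=
  (∃ K, LipschitzWith K u) ∧ ∃ C, ∀ x, ‖u x‖ ≤ C

theorem LipschitzWith.mul_of_norm_le {R : Type*} [SeminormedRing R] {u v : X → R}
    {Ku Kv Cu Cv : ℝ≥0} (hu : LipschitzWith Ku u) (hv : LipschitzWith Kv v)
    (hCu : ∀ x, ‖u x‖ ≤ Cu) (hCv : ∀ x, ‖v x‖ ≤ Cv) :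
    LipschitzWith (Cu * Kv + Cv * Ku) (u * v) := by
  refine LipschitzWith.of_dist_le_mul fun x y => ?_
  have hsplit : u x * v x - u y * v y = u x * (v x - v y) + (u x - u y) * v y := by
    noncomm_ring
  calc dist (u x * v x) (u y * v y)
      ≤ ‖u x‖ * dist (v x) (v y) + dist (u x) (u y) * ‖v y‖ := by
        rw [dist_eq_norm, hsplit, dist_eq_norm, dist_eq_norm]
        exact (norm_add_le _ _).trans (add_le_add (norm_mul_le _ _) (norm_mul_le _ _))
    _ ≤ Cu * (Kv * dist x y) + Ku * dist x y * Cv := by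
        gcongr
        · exact hCu x
        · exact hv.dist_le_mul x y
        · exact hu.dist_le_mul x y
        · exact hCv y
    _ = ↑(Cu * Kv + Cv * Ku) * dist x y := by push_cast; ring

namespace BoundedLipschitz

theorem const {E : Type*} [SeminormedAddCommGroup E] (c : E) : BoundedLipschitz fun _ : X => c :=
  ⟨⟨0, LipschitzWith.const c⟩, ‖c‖, fun _ => le_rfl⟩

theorem add {E : Type*} [SeminormedAddCommGroup E] {u v : X → E} (hu : BoundedLipschitz u)
    (hv : BoundedLipschitz v) : BoundedLipschitz (u + v) := by
  obtain ⟨⟨Ku, hKu⟩, Cu, hCu⟩ := hu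
  obtain ⟨⟨Kv, hKv⟩, Cv, hCv⟩ := hv
  exact ⟨⟨_, hKu.add hKv⟩, Cu + Cv,
    fun x => (norm_add_le _ _).trans (add_le_add (hCu x) (hCv x))⟩

theorem mul {R : Type*} [SeminormedRing R] {u v : X → R} (hu : BoundedLipschitz u)
    (hv : BoundedLipschitz v) : BoundedLipschitz (u * v) := by
  obtain ⟨⟨Ku, hKu⟩, Cu, hCu⟩ := hu
  obtain ⟨⟨Kv, hKv⟩, Cv, hCv⟩ := hv
  refine ⟨⟨_, hKu.mul_of_norm_le hKv (Cu := Cu.toNNReal) (Cv := Cv.toNNReal)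
    (fun x => (hCu x).trans (Real.le_coe_toNNReal Cu))
    (fun x => (hCv x).trans (Real.le_coe_toNNReal Cv))⟩, Cu * Cv, fun x => ?_⟩
  exact (norm_mul_le _ _).trans
    (mul_le_mul (hCu x) (hCv x) (norm_nonneg _) ((norm_nonneg _).trans (hCu x)))

theorem comp_lipschitzWith {E F : Type*} [SeminormedAddCommGroup E] [SeminormedAddCommGroup F]
    {u : X → E} {g : E → F} {K : ℝ≥0} (hu : BoundedLipschitz u) (hg : LipschitzWith K g) :
    BoundedLipschitz (g ∘ u) := by
  obtain ⟨⟨Ku, hKu⟩, Cu, hCu⟩ := hu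
  refine ⟨⟨_, hg.comp hKu⟩, ‖g 0‖ + K * Cu, fun x => ?_⟩
  calc ‖g (u x)‖ ≤ ‖g 0‖ + ‖g (u x) - g 0‖ := norm_le_insert' _ _
    _ ≤ ‖g 0‖ + K * ‖u x - 0‖ := by gcongr; exact hg.norm_sub_le _ _
    _ ≤ ‖g 0‖ + K * Cu := by rw [sub_zero]; gcongr; exact hCu x

end BoundedLipschitz

variable (𝕜 : Type*) [RCLike 𝕜]

def boundedLipschitzRestrict (s : Set X) : StarSubalgebra 𝕜 C(s, 𝕜) where
  carrier := {f | ∃ u : X → 𝕜, BoundedLipschitz u ∧ ⇑f = u ∘ (↑)}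
  add_mem' := by
    rintro f g ⟨u, hu, hf⟩ ⟨v, hv, hg⟩
    exact ⟨u + v, hu.add hv, by rw [ContinuousMap.coe_add, hf, hg]; rfl⟩
  mul_mem' := by
    rintro f g ⟨u, hu, hf⟩ ⟨v, hv, hg⟩
    exact ⟨u * v, hu.mul hv, by rw [ContinuousMap.coe_mul, hf, hg]; rfl⟩
  algebraMap_mem' c := ⟨fun _ => c, .const c, rfl⟩
  star_mem' := by
    rintro f ⟨u, hu, hf⟩
    exact ⟨star ∘ u, hu.comp_lipschitzWith star_isometry.lipschitz, by
      rw [ContinuousMap.coe_star, hf]; rfl⟩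

theorem exists_seq_cutoff_mem_boundedLipschitzRestrict {s : Set X} {Γ : Set s} (hΓ : IsClosed Γ) :
    ∃ w : ℕ → C(s, 𝕜), (∀ n, w n ∈ boundedLipschitzRestrict 𝕜 s) ∧ (∀ n x, ‖w n x‖ ≤ 1) ∧
      (∀ n, ∀ x ∈ Γ, w n x = 0) ∧ ∀ x ∉ Γ, Tendsto (fun n => w n x) atTop (𝓝 1) := by
  let K : Set X := (↑) '' Γ
  let g (n : ℕ) : X → ℝ := fun z => thickenedIndicator (Nat.one_div_pos_of_nat (n := n)) K z
  have hg_mem (n : ℕ) :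
      (ContinuousMap.mk fun x : s => ((g n x : ℝ) : 𝕜)) ∈ boundedLipschitzRestrict 𝕜 s := by
    have hg : BoundedLipschitz (g n) :=
      ⟨⟨_, NNReal.isometry_coe.lipschitz.comp (lipschitzWith_thickenedIndicator _ K)⟩, 1,
        fun z => by
          rw [Real.norm_of_nonneg (NNReal.coe_nonneg _)]
          exact_mod_cast thickenedIndicator_le_one _ K z⟩
    exact ⟨_, hg.comp_lipschitzWith RCLike.lipschitzWith_ofReal, rfl⟩
  refine ⟨fun n => 1 - ⟨fun x : s => ((g n x : ℝ) : 𝕜), by fun_prop⟩,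
    fun n => sub_mem (one_mem _) (hg_mem n), fun n x => ?_, fun n x hx => ?_, fun x hx => ?_⟩
  · have hg_le : g n x ≤ 1 := by exact_mod_cast thickenedIndicator_le_one _ K x
    have hg_nonneg : 0 ≤ g n x := NNReal.coe_nonneg _
    simp only [ContinuousMap.sub_apply, ContinuousMap.one_apply, ContinuousMap.coe_mk]
    rw [← RCLike.ofReal_one, ← RCLike.ofReal_sub, RCLike.norm_ofReal, abs_le]
    constructor <;> linarith
  · have hg_one := thickenedIndicator_one (Nat.one_div_pos_of_nat (n := n)) K
      (Set.mem_image_of_mem _ hx)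
    simp only [ContinuousMap.sub_apply, ContinuousMap.one_apply, ContinuousMap.coe_mk, g, hg_one,
      NNReal.coe_one, RCLike.ofReal_one, sub_self]
  · have hxK : (x : X) ∉ closure K := by rwa [← closure_subtype, hΓ.closure_eq]
    have hlim := tendsto_pi_nhds.1 (thickenedIndicator_tendsto_indicator_closure
      (fun n => Nat.one_div_pos_of_nat) tendsto_one_div_add_atTop_nhds_zero_nat K) x
    rw [Set.indicator_of_notMem hxK] at hlim
    have := ((RCLike.continuous_ofReal (K := 𝕜)).comp NNReal.continuous_coe).tendsto 0 |>.comp hlim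
    simpa [g] using (tendsto_const_nhds (x := (1 : 𝕜))).sub this

end PseudoMetricSpace

section MetricSpace

variable {X : Type*} [MetricSpace X] (𝕜 : Type*) [RCLike 𝕜]

theorem boundedLipschitzRestrict_separatesPoints (s : Set X) :
    (boundedLipschitzRestrict 𝕜 s).SeparatesPoints := by
  intro x y hxy
  have hdist : 0 < dist (y : X) x := dist_pos.2 (Subtype.coe_ne_coe.2 hxy.symm)
  let u : X → ℝ := fun z => min (dist z x) 1
  have hu : BoundedLipschitz u := by
    refine ⟨⟨1, (LipschitzWith.dist_left _).min_const 1⟩, 1, fun z => ?_⟩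
    rw [Real.norm_of_nonneg (le_min dist_nonneg zero_le_one)]
    exact min_le_right _ _
  refine ⟨_, ⟨⟨fun z : s => ((u z : ℝ) : 𝕜), by fun_prop⟩,
    ⟨_, hu.comp_lipschitzWith RCLike.lipschitzWith_ofReal, rfl⟩, rfl⟩, ?_⟩
  simp only [u, ContinuousMap.coe_mk, dist_self, zero_le_one, min_eq_left, RCLike.ofReal_zero]
  exact_mod_cast (lt_min hdist one_pos).ne

variable [MeasurableSpace X] [BorelSpace X] {s : Set X} [CompactSpace s] (μ : Measure s)
  [IsFiniteMeasure μ] [μ.WeaklyRegular] {p : ℝ≥0∞} [Fact (1 ≤ p)]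

theorem dense_toLp_boundedLipschitzRestrict (hp : p ≠ ∞) :
    Dense (ContinuousMap.toLp p μ 𝕜 '' (boundedLipschitzRestrict 𝕜 s : Set C(s, 𝕜))) := by
  refine (ContinuousMap.toLp_denseRange 𝕜 μ 𝕜 hp).dense_image
    (ContinuousLinearMap.continuous _) ?_
  rw [dense_iff_closure_eq, ← StarSubalgebra.topologicalClosure_coe,
    ContinuousMap.starSubalgebra_topologicalClosure_eq_top_of_separatesPoints _
      (boundedLipschitzRestrict_separatesPoints 𝕜 s)]
  rfl

theorem subset_closure_toLp_boundedLipschitzRestrict_vanishing (hp : p ≠ ∞) {Γ : Set s}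
    (hΓ : IsClosed Γ) :
    {φ : Lp 𝕜 p μ | ∀ᵐ x ∂μ, x ∈ Γ → φ x = 0} ⊆ closure (ContinuousMap.toLp p μ 𝕜 ''
      {f | f ∈ boundedLipschitzRestrict 𝕜 s ∧ ∀ x ∈ Γ, f x = 0}) := by
  intro φ hφ
  obtain ⟨w, hw_mem, hw_le, hw_zero, hw_lim⟩ := exists_seq_cutoff_mem_boundedLipschitzRestrict 𝕜 hΓ
  let M (n : ℕ) := (ContinuousLinearMap.mul 𝕜 𝕜).holderL μ ∞ p p (ContinuousMap.toLp ∞ μ 𝕜 (w n))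
  have hw_ae (n : ℕ) : ContinuousMap.toLp ∞ μ 𝕜 (w n) =ᵐ[μ] w n := ContinuousMap.coeFn_toLp μ (w n)
  have hM_lim : Tendsto (fun n => M n φ) atTop (𝓝 φ) := by
    refine tendsto_holder_mul_of_tendsto_ae hp (fun n => (hw_ae n).mono fun x hx => ?_) ?_
    · rw [hx]; exact hw_le n x
    filter_upwards [hφ, ae_all_iff.2 hw_ae] with x hxφ hxw
    simp only [hxw]
    by_cases hx : x ∈ Γ
    · simp [hxφ hx]
    · simpa using (hw_lim x hx).mul_const (φ x)
  have hM_mem (n : ℕ) : M n φ ∈ closure (ContinuousMap.toLp p μ 𝕜 ''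
      {f | f ∈ boundedLipschitzRestrict 𝕜 s ∧ ∀ x ∈ Γ, f x = 0}) := by
    refine closure_mono ?_ <| image_closure_subset_closure_image (M n).continuous
      ⟨φ, dense_toLp_boundedLipschitzRestrict 𝕜 μ hp φ, rfl⟩
    rintro _ ⟨_, ⟨f, hf, rfl⟩, rfl⟩
    refine ⟨w n * f, ⟨mul_mem (hw_mem n) hf, fun x hx => by simp [hw_zero n x hx]⟩, ?_⟩
    refine Lp.ext ?_
    filter_upwards [ContinuousMap.coeFn_toLp (p := p) (𝕜 := 𝕜) μ (w n * f),
      (ContinuousLinearMap.mul 𝕜 𝕜).coeFn_holder (r := p) (ContinuousMap.toLp ∞ μ 𝕜 (w n))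
        (ContinuousMap.toLp p μ 𝕜 f), hw_ae n, ContinuousMap.coeFn_toLp (p := p) (𝕜 := 𝕜) μ f]
      with x h_prod h_holder h_w h_f
    rw [h_prod, ContinuousLinearMap.holderL_apply_apply, h_holder, h_w, h_f]
    rfl
  simpa using mem_closure_of_tendsto hM_lim (Eventually.of_forall hM_mem)

end MetricSpace

theorem closure_of_trace_space_eq_L2_Gamma1_general
    {d : ℕ} (B : Set (EuclideanSpace ℝ (Fin d))) [CompactSpace B]
    (σ : Measure B) [IsFiniteMeasure σ] [σ.Regular]
    (Γ₀ : Set B) (hΓ₀ : IsClosed Γ₀)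
    (D : Submodule ℂ (Lp ℂ 2 σ))
    -- every element of `D = Tr(V)` vanishes a.e. on `Γ₀`:
    (hvanish : ∀ φ ∈ D, ∀ᵐ x ∂σ, x ∈ Γ₀ → (φ : B → ℂ) x = 0)
    -- `D` contains the boundary restrictions of bounded Lipschitz functions vanishing on `Γ₀`:
    (hlip : ∀ (u : EuclideanSpace ℝ (Fin d) → ℂ) (L : NNReal), LipschitzWith L u →
      (∃ c : ℝ, ∀ x, ‖u x‖ ≤ c) → (∀ x : B, x ∈ Γ₀ → u x = 0) →
      ∀ φ : Lp ℂ 2 σ, ((φ : B → ℂ) =ᵐ[σ] fun x : B => u x) → φ ∈ D) :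
    closure (D : Set (Lp ℂ 2 σ)) =
      {φ : Lp ℂ 2 σ | ∀ᵐ x ∂σ, x ∈ Γ₀ → (φ : B → ℂ) x = 0} := by
  refine subset_antisymm (closure_minimal hvanish (isClosed_setOf_ae_mem_imp_eq_zero Γ₀)) ?_
  refine (subset_closure_toLp_boundedLipschitzRestrict_vanishing ℂ σ (p := 2)
    ENNReal.ofNat_ne_top hΓ₀).trans (closure_mono ?_)
  rintro _ ⟨f, ⟨⟨u, ⟨⟨L, hL⟩, hbound⟩, hfu⟩, hf_zero⟩, rfl⟩
  refine hlip u L hL hbound (fun x hx => ?_) _ ?_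
  · simpa [hfu] using hf_zero x hx
  · convert ContinuousMap.coeFn_toLp (p := 2) (𝕜 := ℂ) σ f using 1
    rw [hfu]; rfl

theorem closure_of_trace_space_eq_L2_Gamma1
    {d : ℕ} (B : Set (EuclideanSpace ℝ (Fin d))) (hB : IsCompact B) [CompactSpace B]
    (σ : Measure B) [IsFiniteMeasure σ] [σ.Regular]
    (Γ₀ : Set B) (hΓ₀ : IsClosed Γ₀) (hΓ₀ne : Γ₀ ≠ Set.univ)
    (D : Submodule ℂ (Lp ℂ 2 σ))
    -- every element of `D = Tr(V)` vanishes a.e. on `Γ₀`: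
    (hvanish : ∀ φ ∈ D, ∀ᵐ x ∂σ, x ∈ Γ₀ → (φ : B → ℂ) x = 0)
    -- `D` contains the boundary restrictions of bounded Lipschitz functions vanishing on `Γ₀`:
    (hlip : ∀ (u : EuclideanSpace ℝ (Fin d) → ℂ) (L : NNReal), LipschitzWith L u →
      (∃ c : ℝ, ∀ x, ‖u x‖ ≤ c) → (∀ x : B, x ∈ Γ₀ → u x = 0) →
      ∀ φ : Lp ℂ 2 σ, ((φ : B → ℂ) =ᵐ[σ] fun x : B => u x) → φ ∈ D) :
    closure (D : Set (Lp ℂ 2 σ)) =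
      {φ : Lp ℂ 2 σ | ∀ᵐ x ∂σ, x ∈ Γ₀ → (φ : B → ℂ) x = 0} :=
  closure_of_trace_space_eq_L2_Gamma1_general B σ Γ₀ hΓ₀ D hvanish hlip
end

section
/- Let 𝔞 be a symmetric bilinear form on the real Hilbert space V ⊆ W^{1,2}(Ω) with the ideal decomposition V = V_H ⊕ W_0^{1,2}(Ω), and let 𝔟 be the induced form on Tr(V_H). If u ∈ V_H is real-valued and u⁺ = u_0 + u_1, u⁻ = v_0 + v_1 are the decompositions of its positive and negative parts with u_0, v_0 ∈ W_0^{1,2}(Ω) and u_1, v_1 ∈ V_H, then u_0 = v_0 and 𝔟(Tr u⁺, Tr u⁻) = 𝔞(u⁺,u⁻) − 𝔞(u_0,u_0). -/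
/-! Since `u = u⁺ - u⁻ = (u₀ - v₀) + (u₁ - v₁)` and both `u` and `u₁ - v₁` are `𝔞`-orthogonal to
`W₀`, the difference `u₀ - v₀` lies in `V_H ∩ W₀ = {0}`. Expanding `𝔞(u₀ + u₁, u₀ + v₁)`, the cross
terms vanish by orthogonality (one of them after using symmetry), leaving `𝔞(u₀, u₀) + 𝔞(u₁, v₁)`. -/

theorem Submodule.eq_of_add_sub_add_mem_of_disjoint {R M : Type*} [Ring R] [AddCommGroup M]
    [Module R M] {p q : Submodule R M} (hpq : Disjoint p q) {x₀ x₁ y₀ y₁ : M}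
    (hx₀ : x₀ ∈ q) (hy₀ : y₀ ∈ q) (hx₁ : x₁ ∈ p) (hy₁ : y₁ ∈ p)
    (h : x₀ + x₁ - (y₀ + y₁) ∈ p) : x₀ = y₀ := by
  have hp : x₀ - y₀ ∈ p := by
    convert sub_mem h (sub_mem hx₁ hy₁) using 1
    abel
  exact sub_eq_zero.mp (Submodule.disjoint_def.mp hpq _ hp (sub_mem hx₀ hy₀))

theorem LinearMap.apply_add_add_of_apply_eq_zero {R M : Type*} [CommSemiring R] [AddCommMonoid M]
    [Module R M] (B : M →ₗ[R] M →ₗ[R] R) {w h k : M} (hwk : B w k = 0) (hhw : B h w = 0) :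
    B (w + h) (w + k) = B w w + B h k := by
  simp only [map_add, LinearMap.add_apply, hwk, hhw, add_zero, zero_add]

theorem positive_part_decomposition_identity
    {V : Type*} [AddCommGroup V] [Module ℝ V] [Lattice V]
    [CovariantClass V V (· + ·) (· ≤ ·)]
    (W₀ : Submodule ℝ V)
    (a : V →ₗ[ℝ] V →ₗ[ℝ] ℝ)
    (hsymm : ∀ x y : V, a x y = a y x)
    -- uniqueness in the decomposition `V = V_H ⊕ W₀`:
    (hdisjoint : ∀ x : V, (∀ g ∈ W₀, a x g = 0) → x ∈ W₀ → x = 0)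
    (u u₀ u₁ v₀ v₁ : V)
    (hu : ∀ g ∈ W₀, a u g = 0)            -- `u ∈ V_H`
    (hup : u⁺ = u₀ + u₁) (hu₀ : u₀ ∈ W₀) (hu₁ : ∀ g ∈ W₀, a u₁ g = 0)
    (hum : u⁻ = v₀ + v₁) (hv₀ : v₀ ∈ W₀) (hv₁ : ∀ g ∈ W₀, a v₁ g = 0) :
    u₀ = v₀ ∧ a u₁ v₁ = a u⁺ u⁻ - a u₀ u₀ := by
  have hVH : Disjoint (W₀.orthogonalBilin a.flip) W₀ := Submodule.disjoint_def.mpr hdisjoint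
  have h₀ : u₀ = v₀ := by
    refine Submodule.eq_of_add_sub_add_mem_of_disjoint hVH hu₀ hv₀ hu₁ hv₁ ?_
    rwa [← hup, ← hum, posPart_sub_negPart]
  refine ⟨h₀, ?_⟩
  have hexpand : a u⁺ u⁻ = a u₀ u₀ + a u₁ v₁ := by
    rw [hup, hum, ← h₀]
    exact a.apply_add_add_of_apply_eq_zero ((hsymm _ _).trans (hv₁ u₀ hu₀)) (hu₁ u₀ hu₀)
  rw [hexpand]
  ring
end

section
/- Let 𝔟 and 𝔟̃ be the Dirichlet-to-Neumann forms associated with closed boundary sets Γ_0 ⊆ Γ̃_0. Then D(𝔟̃) is an ideal of D(𝔟): whenever 0 ≤ φ ≤ ψ with φ ∈ D(𝔟) and ψ ∈ D(𝔟̃), one has φ ∈ D(𝔟̃). Consequently (by the domination criterion for forms) 0 ≤ T_t^{Γ̃_1} φ ≤ T_t^{Γ_1} φ for all 0 ≤ φ ∈ L²(∂Ω) and t ≥ 0. -/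
open MeasureTheory

lemma ae_eq_zero_on_of_nonneg_of_le {B α : Type*} [MeasurableSpace B] {σ : Measure B}
    [PartialOrder α] [Zero α] {S : Set B} {f g : B → α}
    (hfg : ∀ᵐ x ∂σ, 0 ≤ f x ∧ f x ≤ g x) (hg : ∀ᵐ x ∂σ, x ∈ S → g x = 0) :
    ∀ᵐ x ∂σ, x ∈ S → f x = 0 := by
  filter_upwards [hfg, hg] with x ⟨hf_nonneg, hf_le⟩ hgx hx
  exact le_antisymm (hgx hx ▸ hf_le) hf_nonneg

theorem DtN_form_domain_is_ideal_general
    {B : Type*} [MeasurableSpace B] (σ : Measure B)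
    (Γ₀ Γ₀t : Set B)
    {W : Type*} [AddCommGroup W] [Module ℝ W]
    (Tr : W →ₗ[ℝ] Lp ℝ 2 σ)
    (φ ψ : Lp ℝ 2 σ)
    -- `φ ∈ D(𝔟) = Tr(V)`:
    (hφ : ∃ u : W, (∀ᵐ x ∂σ, x ∈ Γ₀ → (Tr u : B → ℝ) x = 0) ∧ Tr u = φ)
    -- `ψ ∈ D(𝔟̃) = Tr(Ṽ)`:
    (hψ : ∃ v : W, (∀ᵐ x ∂σ, x ∈ Γ₀t → (Tr v : B → ℝ) x = 0) ∧ Tr v = ψ)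
    -- `0 ≤ φ ≤ ψ`:
    (horder : ∀ᵐ x ∂σ, 0 ≤ (φ : B → ℝ) x ∧ (φ : B → ℝ) x ≤ (ψ : B → ℝ) x) :
    ∃ u : W, (∀ᵐ x ∂σ, x ∈ Γ₀t → (Tr u : B → ℝ) x = 0) ∧ Tr u = φ := by
  obtain ⟨u, -, rfl⟩ := hφ
  obtain ⟨v, hv_zero, rfl⟩ := hψ
  exact ⟨u, ae_eq_zero_on_of_nonneg_of_le horder hv_zero, rfl⟩

theorem DtN_form_domain_is_ideal
    {B : Type*} [MeasurableSpace B] (σ : Measure B)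
    (Γ₀ Γ₀t : Set B) (hsub : Γ₀ ⊆ Γ₀t)
    {W : Type*} [AddCommGroup W] [Module ℝ W]
    (Tr : W →ₗ[ℝ] Lp ℝ 2 σ)
    (φ ψ : Lp ℝ 2 σ)
    -- `φ ∈ D(𝔟) = Tr(V)`:
    (hφ : ∃ u : W, (∀ᵐ x ∂σ, x ∈ Γ₀ → (Tr u : B → ℝ) x = 0) ∧ Tr u = φ)
    -- `ψ ∈ D(𝔟̃) = Tr(Ṽ)`:
    (hψ : ∃ v : W, (∀ᵐ x ∂σ, x ∈ Γ₀t → (Tr v : B → ℝ) x = 0) ∧ Tr v = ψ)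
    -- `0 ≤ φ ≤ ψ`:
    (horder : ∀ᵐ x ∂σ, 0 ≤ (φ : B → ℝ) x ∧ (φ : B → ℝ) x ≤ (ψ : B → ℝ) x) :
    ∃ u : W, (∀ᵐ x ∂σ, x ∈ Γ₀t → (Tr u : B → ℝ) x = 0) ∧ Tr u = φ :=
  DtN_form_domain_is_ideal_general σ Γ₀ Γ₀t Tr φ ψ hφ hψ horder
end
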